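/- For the Moran walk, fix h ∈ ℕ and let F_h(z,u) := Σ_{n≥0} (Σ_{k=0}^{h} Pr(H_n ≤ h and Y_n = k) u^k) z^n, a formal power series in z with coefficients in the polynomial ring ℝ[u]. Then in ℝ[u][[z]] one has the identity (1 − p u z) · (1 − z + q p^{h+1} z^{h+2}) · F_h(z,u) = (1 − p z) · (1 − (p z u)^{h+1}). -/

import Mathlib

/-- Altitude of the Moran walk after `j` steps: `true` means an up-step (+1),
`false` means a reset to altitude 0. -/
def moranY (ω : ℕ → Bool) : ℕ → ℕ
  | 0 => 0
  | j + 1 => if ω j then moranY ω j + 1 else 0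

/-- Height `H_n = max_{0 ≤ j ≤ n} Y_j` of the Moran walk. -/
def moranH (ω : ℕ → Bool) (n : ℕ) : ℕ :=
  (Finset.range (n + 1)).sup (moranY ω)

open Classical in
/-- Probability of the event `E` under the product measure on Moran walks of length `n`,
where an up-step has weight `p` and a reset has weight `1 - p`. -/
noncomputable def moranPr (p : ℝ) (n : ℕ) (E : (ℕ → Bool) → Prop) : ℝ :=
  ∑ ω : Fin n → Bool,
    (∏ i, if ω i then p else 1 - p) *
      (if E (fun j => if h : j < n then ω ⟨j, h⟩ else false) then 1 else 0)

/-- The bivariate generating function `F_h(z,u)` of Moran walks of height at most `h`,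
as a formal power series in `z` with coefficients in `ℝ[u]`:
`F_h(z,u) = Σ_{n≥0} (Σ_{k=0}^h Pr(H_n ≤ h ∧ Y_n = k) u^k) z^n`. -/
noncomputable def moranF (p : ℝ) (h : ℕ) : PowerSeries (Polynomial ℝ) :=
  PowerSeries.mk fun n =>
    ∑ k ∈ Finset.range (h + 1),
      Polynomial.C (moranPr p n (fun ω => moranH ω n ≤ h ∧ moranY ω n = k))
        * Polynomial.X ^ k

namespace MoranAux

theorem moranY_congr {f g : ℕ → Bool} (j : ℕ) (hfg : ∀ i < j, f i = g i) :
    moranY f j = moranY g j := by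
  induction j with
  | zero => rfl
  | succ j ih =>
    simp only [moranY, hfg j (Nat.lt_succ_self j),
      ih fun i hi => hfg i (hi.trans (Nat.lt_succ_self j))]

theorem moranY_le (f : ℕ → Bool) (j : ℕ) : moranY f j ≤ j := by
  induction j with
  | zero => exact le_refl 0
  | succ j ih =>
    simp only [moranY]
    split
    · omega
    · omega

theorem moranY_update (f : ℕ → Bool) (n : ℕ) (b : Bool) {j : ℕ} (hj : j ≤ n) :
    moranY (Function.update f n b) j = moranY f j :=
  moranY_congr j fun i hi => Function.update_of_ne (by omega) _ _

theorem moranY_update_succ (f : ℕ → Bool) (n : ℕ) (b : Bool) :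
    moranY (Function.update f n b) (n + 1) = if b then moranY f n + 1 else 0 := by
  simp only [moranY, Function.update_self, moranY_update f n b (le_refl n)]

theorem moranH_update (f : ℕ → Bool) (n : ℕ) (b : Bool) :
    moranH (Function.update f n b) n = moranH f n := by
  unfold moranH
  exact Finset.sup_congr rfl fun j hj =>
    moranY_update f n b (by simpa using Nat.lt_succ_iff.mp (Finset.mem_range.mp hj))

theorem moranH_update_succ (f : ℕ → Bool) (n : ℕ) (b : Bool) :
    moranH (Function.update f n b) (n + 1)
      = max (moranH f n) (moranY (Function.update f n b) (n + 1)) := by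
  unfold moranH
  rw [Finset.range_add_one, Finset.sup_insert, sup_comm]
  congr 1
  exact Finset.sup_congr rfl fun j hj =>
    moranY_update f n b (by simpa using Nat.lt_succ_iff.mp (Finset.mem_range.mp hj))

theorem moranY_le_moranH (f : ℕ → Bool) (n : ℕ) : moranY f n ≤ moranH f n :=
  Finset.le_sup (Finset.mem_range.mpr (Nat.lt_succ_self n))

/-- extension by false -/
def ext (n : ℕ) (ω : Fin n → Bool) : ℕ → Bool := fun j => if h : j < n then ω ⟨j, h⟩ else false

theorem ext_snoc (n : ℕ) (ω : Fin n → Bool) (b : Bool) :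
    ext (n + 1) (Fin.snoc ω b) = Function.update (ext n ω) n b := by
  funext j
  rcases lt_trichotomy j n with hj | hj | hj
  · rw [Function.update_of_ne (by omega)]
    simp only [ext, dif_pos hj, dif_pos (by omega : j < n + 1)]
    rw [show (⟨j, by omega⟩ : Fin (n+1)) = Fin.castSucc ⟨j, hj⟩ from rfl, Fin.snoc_castSucc]
  · subst hj
    rw [Function.update_self]
    simp only [ext, dif_pos (by omega : j < j + 1)]
    rw [show (⟨j, by omega⟩ : Fin (j+1)) = Fin.last j from rfl, Fin.snoc_last]
  · rw [Function.update_of_ne (by omega)]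
    simp only [ext, dif_neg (by omega : ¬ j < n + 1), dif_neg (by omega : ¬ j < n)]

open Classical in
theorem moranPr_def (p : ℝ) (n : ℕ) (E : (ℕ → Bool) → Prop) :
    moranPr p n E = ∑ ω : Fin n → Bool,
      (∏ i, if ω i then p else 1 - p) * (if E (ext n ω) then 1 else 0) := rfl

open Classical in
theorem moranPr_congr (p : ℝ) (n : ℕ) {E E' : (ℕ → Bool) → Prop}
    (hE : ∀ f, E f ↔ E' f) : moranPr p n E = moranPr p n E' := by
  unfold moranPr
  refine Finset.sum_congr rfl fun ω _ => ?_
  congr 1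
  simp only [hE]

open Classical in
theorem moranPr_succ (p : ℝ) (n : ℕ) (E : (ℕ → Bool) → Prop) :
    moranPr p (n + 1) E
      = p * moranPr p n (fun f => E (Function.update f n true))
        + (1 - p) * moranPr p n (fun f => E (Function.update f n false)) := by
  rw [moranPr_def, moranPr_def, moranPr_def]
  rw [← Fintype.sum_equiv (Fin.snocEquiv (fun _ => Bool))
    (fun x => (∏ i, if (Fin.snocEquiv (fun _ => Bool) x) i then p else 1 - p) *
      (if E (ext (n+1) (Fin.snocEquiv (fun _ => Bool) x)) then 1 else 0))
    (fun ω => (∏ i, if ω i then p else 1 - p) * (if E (ext (n+1) ω) then 1 else 0))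
    (fun x => rfl)]
  rw [Fintype.sum_prod_type]
  rw [Fintype.sum_bool]
  simp only [Fin.snocEquiv_apply]
  have hprod : ∀ (b : Bool) (ω : Fin n → Bool),
      (∏ i : Fin (n+1), if (Fin.snoc ω b : Fin (n+1) → Bool) i then p else 1 - p)
        = (∏ i : Fin n, if ω i then p else 1 - p) * (if b then p else 1 - p) := by
    intro b ω
    rw [Fin.prod_univ_castSucc]
    simp [Fin.snoc_castSucc, Fin.snoc_last]
  have hext : ∀ (b : Bool) (ω : Fin n → Bool),
      E (ext (n+1) (Fin.snoc ω b)) ↔ E (Function.update (ext n ω) n b) := by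
    intro b ω; rw [ext_snoc]
  rw [Finset.mul_sum, Finset.mul_sum]
  congr 1
  · refine Finset.sum_congr rfl fun ω _ => ?_
    have e : ((Fin.snocEquiv fun _ => Bool) (true, ω)) = Fin.snoc ω true := rfl
    simp only [e, hprod, ext_snoc, eq_self_iff_true, if_true]
    ring
  · refine Finset.sum_congr rfl fun ω _ => ?_
    have e : ((Fin.snocEquiv fun _ => Bool) (false, ω)) = Fin.snoc ω false := rfl
    simp only [e, hprod, ext_snoc, if_neg (by simp : ¬ (false = true))]
    ring

variable (p : ℝ) (h : ℕ)

noncomputable def a (n k : ℕ) : ℝ :=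
  moranPr p n fun ω => moranH ω n ≤ h ∧ moranY ω n = k

noncomputable def s (n : ℕ) : ℝ := moranPr p n fun ω => moranH ω n ≤ h

open Classical in
theorem moranPr_split (n : ℕ) (A B : (ℕ → Bool) → Prop) :
    moranPr p n A = moranPr p n (fun f => A f ∧ B f) + moranPr p n (fun f => A f ∧ ¬ B f) := by
  rw [moranPr_def, moranPr_def, moranPr_def, ← Finset.sum_add_distrib]
  refine Finset.sum_congr rfl fun ω _ => ?_
  rw [← mul_add]
  congr 1
  by_cases hA : A (ext n ω) <;> by_cases hB : B (ext n ω) <;> simp [hA, hB]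

open Classical in
theorem moranPr_false (n : ℕ) {E : (ℕ → Bool) → Prop} (hE : ∀ f, ¬ E f) :
    moranPr p n E = 0 := by
  rw [moranPr_def]
  refine Finset.sum_eq_zero fun ω _ => ?_
  rw [if_neg (hE _), mul_zero]

theorem moranPr_zero_true {E : (ℕ → Bool) → Prop} (hE : E (fun _ => false)) :
    moranPr p 0 E = 1 := by
  rw [moranPr_def]
  rw [Fintype.sum_eq_single (fun (_ : Fin 0) => false)
    (fun ω hω => absurd (Subsingleton.elim ω _) hω)]
  · have : ext 0 (fun (i : Fin 0) => false) = fun _ => false := by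
      funext j; simp [ext]
    rw [this, if_pos hE]
    simp

theorem a_succ_zero (n : ℕ) : a p h (n + 1) 0 = (1 - p) * s p h n := by
  unfold a
  rw [moranPr_succ]
  rw [moranPr_false p n (E := fun f =>
      moranH (Function.update f n true) (n+1) ≤ h ∧ moranY (Function.update f n true) (n+1) = 0)
    (fun f hf => by
      simp only [moranY_update_succ] at hf
      simp at hf)]
  rw [moranPr_congr p n (E' := fun f => moranH f n ≤ h) (fun f => by
    constructor
    · rintro ⟨h1, _⟩
      rw [moranH_update_succ] at h1
      exact le_trans (le_max_left _ _) h1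
    · intro h1
      rw [moranH_update_succ, moranY_update_succ]
      simp [h1])]
  simp [s]

theorem a_succ_succ (n k : ℕ) (hk : k + 1 ≤ h) : a p h (n + 1) (k + 1) = p * a p h n k := by
  unfold a
  rw [moranPr_succ]
  rw [moranPr_false p n (E := fun f =>
      moranH (Function.update f n false) (n+1) ≤ h ∧ moranY (Function.update f n false) (n+1) = k + 1)
    (fun f hf => by
      simp only [moranY_update_succ] at hf
      simp at hf)]
  rw [moranPr_congr p n (E' := fun f => moranH f n ≤ h ∧ moranY f n = k) (fun f => by
    simp only [moranH_update_succ, moranY_update_succ, if_true]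
    constructor
    · rintro ⟨h1, h2⟩
      exact ⟨le_trans (le_max_left _ _) h1, by omega⟩
    · rintro ⟨h1, h2⟩
      subst h2
      exact ⟨by simp [h1]; omega, rfl⟩)]
  simp

theorem s_succ (n : ℕ) : s p h (n + 1) = s p h n - p * a p h n h := by
  unfold s
  rw [moranPr_succ]
  rw [moranPr_congr p n
    (E := fun f => moranH (Function.update f n false) (n+1) ≤ h)
    (E' := fun f => moranH f n ≤ h) (fun f => by
      simp only [moranH_update_succ, moranY_update_succ]
      simp)]
  rw [moranPr_congr p n
    (E := fun f => moranH (Function.update f n true) (n+1) ≤ h)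
    (E' := fun f => (moranH f n ≤ h) ∧ ¬ (moranY f n = h)) (fun f => by
      simp only [moranH_update_succ, moranY_update_succ, if_true, max_le_iff]
      have := moranY_le_moranH f n
      omega)]
  have hsplit := moranPr_split p n (fun f => moranH f n ≤ h) (fun f => moranY f n = h)
  unfold a
  rw [hsplit]
  ring


theorem moranH_zero (f : ℕ → Bool) : moranH f 0 = 0 := by
  simp [moranH, moranY]

theorem a_zero (k : ℕ) : a p h 0 k = if k = 0 then 1 else 0 := by
  rcases eq_or_ne k 0 with rfl | hk
  · rw [if_pos rfl]
    exact moranPr_zero_true p (by simp [moranH_zero, moranY])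
  · rw [if_neg hk]
    exact moranPr_false p 0 fun f hf => hk (hf.2.symm.trans rfl)

theorem s_zero : s p h 0 = 1 :=
  moranPr_zero_true p (by simp [moranH_zero])

theorem a_gt {n k : ℕ} (hk : n < k) : a p h n k = 0 :=
  moranPr_false p n fun f hf => by
    have := moranY_le f n
    omega

theorem a_diag {n : ℕ} (hn : n ≤ h) : a p h n n = p ^ n := by
  induction n with
  | zero => simp [a_zero]
  | succ n ih =>
    rw [a_succ_succ p h n n hn, ih (by omega)]
    ring

theorem s_le_h {n : ℕ} (hn : n ≤ h) : s p h n = 1 := by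
  induction n with
  | zero => exact s_zero p h
  | succ n ih =>
    rw [s_succ, a_gt p h (by omega : n < h), ih (by omega)]
    ring

theorem a_formula {k : ℕ} (hk : k ≤ h) (n : ℕ) :
    a p h (n + k + 1) k = (1 - p) * p ^ k * s p h n := by
  induction k generalizing n with
  | zero => rw [a_succ_zero]; ring
  | succ k ih =>
    rw [show n + (k + 1) + 1 = (n + k + 1) + 1 from by omega,
      a_succ_succ p h _ k hk, ih (by omega) n]
    ring

theorem a_formula' {n m k : ℕ} (hk : k ≤ h) (hm : m = n + k + 1) :
    a p h m k = (1 - p) * p ^ k * s p h n := by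
  subst hm; exact a_formula p h hk n

theorem s_h1 : s p h (h + 1) = 1 - p ^ (h + 1) := by
  rw [s_succ, a_diag p h (le_refl h), s_le_h p h (le_refl h)]
  ring

theorem s_rec (n : ℕ) : s p h (n + h + 2) = s p h (n + h + 1) - (1 - p) * p ^ (h + 1) * s p h n := by
  rw [show n + h + 2 = (n + h + 1) + 1 from rfl, s_succ,
    a_formula' p h (le_refl h) (by omega : n + h + 1 = n + h + 1)]
  ring

theorem R1 {m : ℕ} (hm : m < h) {k : ℕ} (hk : k ≤ h) :
    a p h (m + 1) k = a p h m k
      + (if k = m + 1 then p ^ (m + 1) else 0) - (if k = m then p ^ (m + 1) else 0) := by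
  rcases Nat.lt_trichotomy k m with hkm | rfl | hkm
  · obtain ⟨t, rfl⟩ : ∃ t, m = k + t + 1 := ⟨m - k - 1, by omega⟩
    rw [a_formula' p h hk (by omega : k + t + 1 + 1 = (t + 1) + k + 1),
      a_formula' p h hk (by omega : k + t + 1 = t + k + 1), s_le_h p h (by omega),
      s_le_h p h (by omega), if_neg (by omega), if_neg (by omega)]
    ring
  · rw [a_formula' p h hk (by omega : k + 1 = 0 + k + 1), s_zero,
      a_diag p h hk, if_neg (by omega), if_pos rfl]
    ring
  · rcases eq_or_ne k (m + 1) with rfl | hne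
    · rw [a_diag p h hk, a_gt p h (by omega), if_pos rfl, if_neg (by omega)]
      ring
    · rw [a_gt p h (by omega), a_gt p h (by omega), if_neg hne, if_neg (by omega)]
      ring

theorem R2 {k : ℕ} (hk : k ≤ h) :
    a p h (h + 1) k = a p h h k - (if k = h then p ^ (h + 1) else 0) := by
  rcases eq_or_ne k h with heq | hne
  · rw [heq, if_pos rfl, a_formula' p h (le_refl h) (by omega : h + 1 = 0 + h + 1), s_zero,
      a_diag p h (le_refl h)]
    ring
  · obtain ⟨t, hu⟩ : ∃ t, h = k + t + 1 := ⟨h - k - 1, by omega⟩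
    rw [a_formula' p h hk (by omega : h + 1 = (t + 1) + k + 1),
      a_formula' p h hk (by omega : h = t + k + 1),
      s_le_h p h (by omega), s_le_h p h (by omega), if_neg hne]
    ring

theorem R3 (m : ℕ) {k : ℕ} (hk : k ≤ h) :
    a p h (m + h + 2) k = a p h (m + h + 1) k - (1 - p) * p ^ (h + 1) * a p h m k := by
  rcases Nat.lt_trichotomy k m with hkm | rfl | hkm
  · obtain ⟨t, rfl⟩ : ∃ t, m = k + t + 1 := ⟨m - k - 1, by omega⟩
    rw [a_formula' p h hk (by omega : k + t + 1 + h + 2 = (t + h + 2) + k + 1),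
      a_formula' p h hk (by omega : k + t + 1 + h + 1 = (t + h + 1) + k + 1),
      a_formula' p h hk (by omega : k + t + 1 = t + k + 1), s_rec p h t]
    ring
  · rw [a_formula' p h hk (by omega : k + h + 2 = (h + 1) + k + 1),
      a_formula' p h hk (by omega : k + h + 1 = h + k + 1),
      a_diag p h hk, s_h1, s_le_h p h (le_refl h)]
    ring
  · obtain ⟨t, rfl⟩ : ∃ t, k = m + t + 1 := ⟨k - m - 1, by omega⟩
    obtain ⟨u, hu⟩ : ∃ u, h = t + u + 1 := ⟨h - t - 1, by omega⟩
    rw [a_formula' p h hk (by omega : m + h + 2 = (u + 1) + (m + t + 1) + 1),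
      a_formula' p h hk (by omega : m + h + 1 = u + (m + t + 1) + 1),
      a_gt p h (by omega), s_le_h p h (by omega), s_le_h p h (by omega)]
    ring

open Polynomial in
noncomputable def fP (n : ℕ) : Polynomial ℝ :=
  ∑ k ∈ Finset.range (h + 1), Polynomial.C (a p h n k) * Polynomial.X ^ k

open Polynomial in
theorem sum_ind {j : ℕ} (hj : j ≤ h) (c : ℝ) :
    (∑ k ∈ Finset.range (h + 1), Polynomial.C (if k = j then c else 0) * Polynomial.X ^ k)
      = Polynomial.C c * Polynomial.X ^ j := by
  rw [Finset.sum_eq_single_of_mem j (Finset.mem_range.mpr (by omega))]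
  · rw [if_pos rfl]
  · intro k _ hkj
    rw [if_neg hkj, map_zero, zero_mul]

open Polynomial in
theorem P0 : fP p h 0 = 1 := by
  unfold fP
  simp only [a_zero]
  rw [sum_ind h (by omega : 0 ≤ h)]
  simp

open Polynomial in
theorem P1 {m : ℕ} (hm : m < h) :
    fP p h (m + 1) = fP p h m + (Polynomial.C p * Polynomial.X) ^ (m + 1)
      - Polynomial.C p * (Polynomial.C p * Polynomial.X) ^ m := by
  have e1 : fP p h (m + 1) = fP p h m
      + (∑ k ∈ Finset.range (h + 1), Polynomial.C (if k = m + 1 then p ^ (m+1) else 0) * X ^ k)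
      - (∑ k ∈ Finset.range (h + 1), Polynomial.C (if k = m then p ^ (m+1) else 0) * X ^ k) := by
    unfold fP
    rw [← Finset.sum_add_distrib, ← Finset.sum_sub_distrib]
    refine Finset.sum_congr rfl fun k hk => ?_
    rw [R1 p h hm (Nat.lt_succ_iff.mp (Finset.mem_range.mp hk)), map_sub, map_add]
    ring
  rw [e1, sum_ind h (by omega) _, sum_ind h (by omega) _, map_pow]
  ring

open Polynomial in
theorem P2 : fP p h (h + 1) = fP p h h - Polynomial.C p * (Polynomial.C p * Polynomial.X) ^ h := by
  have e1 : fP p h (h + 1) = fP p h h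
      - (∑ k ∈ Finset.range (h + 1), Polynomial.C (if k = h then p ^ (h+1) else 0) * X ^ k) := by
    unfold fP
    rw [← Finset.sum_sub_distrib]
    refine Finset.sum_congr rfl fun k hk => ?_
    rw [R2 p h (Nat.lt_succ_iff.mp (Finset.mem_range.mp hk)), map_sub]
    ring
  rw [e1, sum_ind h (le_refl h) _, map_pow]
  ring

open Polynomial in
theorem P3 (m : ℕ) :
    fP p h (m + h + 2) = fP p h (m + h + 1)
      - Polynomial.C ((1 - p) * p ^ (h + 1)) * fP p h m := by
  unfold fP
  rw [Finset.mul_sum, ← Finset.sum_sub_distrib]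
  refine Finset.sum_congr rfl fun k hk => ?_
  rw [R3 p h m (Nat.lt_succ_iff.mp (Finset.mem_range.mp hk)), map_sub, map_mul]
  ring

theorem coeff_S (n : ℕ) :
    PowerSeries.coeff n
      (∑ j ∈ Finset.range (h + 1),
        (PowerSeries.C (Polynomial.C p * Polynomial.X) * PowerSeries.X) ^ j)
    = if n ≤ h then (Polynomial.C p * Polynomial.X) ^ n else 0 := by
  rw [map_sum]
  have e : ∀ j : ℕ, ((PowerSeries.C (Polynomial.C p * Polynomial.X))
      * PowerSeries.X) ^ j
      = PowerSeries.C ((Polynomial.C p * Polynomial.X) ^ j)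
        * PowerSeries.X ^ j := by
    intro j; rw [mul_pow, ← map_pow]
  calc (∑ j ∈ Finset.range (h + 1), PowerSeries.coeff n
        (((PowerSeries.C (Polynomial.C p * Polynomial.X)) * PowerSeries.X) ^ j))
      = ∑ j ∈ Finset.range (h + 1),
          (if n = j then (Polynomial.C p * Polynomial.X) ^ j else 0) := by
        refine Finset.sum_congr rfl fun j _ => ?_
        rw [e, PowerSeries.coeff_C_mul, PowerSeries.coeff_X_pow]
        split <;> simp
    _ = _ := by
        rw [Finset.sum_ite_eq]
        simp [Nat.lt_succ_iff]

theorem hFcoeff (n : ℕ) : PowerSeries.coeff n (moranF p h) = fP p h n := by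
  rw [moranF, PowerSeries.coeff_mk]
  rfl

theorem key :
    (1 - PowerSeries.X
        + PowerSeries.C (Polynomial.C ((1 - p) * p ^ (h + 1)))
          * PowerSeries.X ^ (h + 2)) * moranF p h
      = (1 - PowerSeries.C (Polynomial.C p) * PowerSeries.X)
        * ∑ j ∈ Finset.range (h + 1),
            (PowerSeries.C (Polynomial.C p * Polynomial.X) * PowerSeries.X) ^ j := by
  set S := ∑ j ∈ Finset.range (h + 1),
      (PowerSeries.C (Polynomial.C p * Polynomial.X) * PowerSeries.X) ^ j with hS
  have lexp : (1 - PowerSeries.X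
        + PowerSeries.C (Polynomial.C ((1 - p) * p ^ (h + 1)))
          * PowerSeries.X ^ (h + 2)) * moranF p h
      = moranF p h - PowerSeries.X ^ 1 * moranF p h
        + PowerSeries.C (Polynomial.C ((1 - p) * p ^ (h + 1)))
          * (PowerSeries.X ^ (h + 2) * moranF p h) := by ring
  have rexp : (1 - PowerSeries.C (Polynomial.C p) * PowerSeries.X) * S
      = S - PowerSeries.C (Polynomial.C p) * (PowerSeries.X ^ 1 * S) := by
    ring
  rw [lexp, rexp]
  refine PowerSeries.ext fun n => ?_
  simp only [map_add, map_sub, PowerSeries.coeff_C_mul, PowerSeries.coeff_X_pow_mul', hS,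
    coeff_S, hFcoeff]
  rcases n with _ | m
  · rw [if_neg (by omega), if_neg (by omega), if_pos (by omega), if_neg (by omega), P0]
    simp
  · rw [if_pos (by omega : 1 ≤ m + 1), if_pos (by omega : 1 ≤ m + 1),
      show m + 1 - 1 = m from rfl]
    rcases Nat.lt_trichotomy m h with hm | hm | hm
    · rw [if_neg (by omega), if_pos (by omega), if_pos (by omega), P1 p h hm]
      ring
    · subst hm
      rw [if_neg (by omega), if_neg (by omega), if_pos (le_refl m), P2]
      ring
    · obtain ⟨t, rfl⟩ : ∃ t, m = t + h + 1 := ⟨m - h - 1, by omega⟩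
      rw [if_pos (by omega : h + 2 ≤ t + h + 1 + 1), if_neg (by omega), if_neg (by omega),
        show t + h + 1 + 1 - (h + 2) = t from by omega, show t + h + 1 + 1 = t + h + 2 from by omega,
        P3 p h t]
      ring

end MoranAux

/-- In `ℝ[u][[z]]` one has
`(1 - puz)(1 - z + q p^{h+1} z^{h+2}) F_h(z,u) = (1 - pz)(1 - (pzu)^{h+1})`. -/
theorem moranWalk_boundedHeight_generatingFunction
    (p : ℝ) (hp0 : 0 < p) (hp1 : p < 1) (q : ℝ) (hq : q = 1 - p) (h : ℕ) :
    (1 - PowerSeries.C (Polynomial.C p * Polynomial.X) * PowerSeries.X)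
      * (1 - PowerSeries.X
          + PowerSeries.C (Polynomial.C (q * p ^ (h + 1)))
            * PowerSeries.X ^ (h + 2))
      * moranF p h
    = (1 - PowerSeries.C (Polynomial.C p) * PowerSeries.X)
      * (1 - (PowerSeries.C (Polynomial.C p * Polynomial.X)
              * PowerSeries.X) ^ (h + 1)) := by
  subst hq
  have KEY := MoranAux.key p h
  rw [mul_assoc, KEY]
  have geom := geom_sum_mul
    (PowerSeries.C (Polynomial.C p * Polynomial.X) * PowerSeries.X) (h + 1)
  linear_combination
    (-(1 - PowerSeries.C (Polynomial.C p) * PowerSeries.X)) * geom
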